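/- Let k be an integer with 3 ≤ k ≤ 6, let C be a k-rotationally symmetric planar convex body with inradius r and circumradius R, and let S be any k-subdivision of C, i.e. connected subsets C₁, …, C_k of C whose union is C and whose interiors are pairwise disjoint. Then the maximum relative diameter of S is at least that of the standard k-partition: d_M(S) = max_{1≤i≤k} diam(C_i) ≥ max{R, 2·r·sin(π/k)} = d_M(P_k). In other words, for 3 ≤ k ≤ 6 the standard k-partition is a minimizing k-subdivision for the maximum relative diameter. -/

import Mathlib

open Metric Set

/-- Rotation of the plane (identified with `ℂ`) about the point `p` by angle `2π/k`. -/
noncomputable def planeRotation (k : ℕ) (p z : ℂ) : ℂ :=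
  p + Complex.exp (2 * (Real.pi : ℂ) * Complex.I / (k : ℂ)) * (z - p)

/-- A `k`-rotationally symmetric planar convex body with center of symmetry `p`. -/
def IsRotSymConvexBody (k : ℕ) (p : ℂ) (C : Set ℂ) : Prop :=
  IsCompact C ∧ Convex ℝ C ∧ (interior C).Nonempty ∧ planeRotation k p '' C = C

/-- The inradius of a planar set. -/
noncomputable def inradius (C : Set ℂ) : ℝ :=
  sSup {r : ℝ | ∃ c : ℂ, closedBall c r ⊆ C}

/-- The circumradius of a planar set. -/
noncomputable def circumradius (C : Set ℂ) : ℝ :=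
  sInf {R : ℝ | ∃ c : ℂ, C ⊆ closedBall c R}

/-- A `k`-subdivision of `C`: `k` connected subsets of `C` covering `C`,
with pairwise disjoint interiors. -/
def IsSubdivision (C : Set ℂ) (k : ℕ) (P : Fin k → Set ℂ) : Prop :=
  (∀ i, P i ⊆ C) ∧ (∀ i, IsConnected (P i)) ∧ (⋃ i, P i) = C ∧
    ∀ i j, i ≠ j → interior (P i) ∩ interior (P j) = ∅

/-!
For `2 ≤ k` the centre `p` is the average of every orbit of the rotation, so by convexity a ball
of radius `s` in `C` can be moved to `p`, and `C` lies in the closed ball about `p` through a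
farthest point `x` of `C`.

Circumradius: with `ζ = exp (2πi / k)`, the vertices `p + ζ^j (x - p)` of the regular `k`-gon,
together with `p`, are `k + 1` points of `C`, so two lie in one piece. Any two of them are at
distance at least `‖x - p‖ ≥ R`, since the side `2 ‖x - p‖ sin (π / k)` is at least `‖x - p‖`
for `k ≤ 6`.

Inradius: of `N = k M + 1` equally spaced points on the circle of radius `s < r` about `p`, some
piece contains `M + 1`. For `k ≥ 3` two of them are at least `M` steps apart both ways round the
circle, hence at distance at least `2 s sin (π M / N)`, which tends to `2 s sin (π / k)`.
-/

open Real Filter Topology Bornology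

theorem sin_le_sin_of_le_of_le_pi_sub {x y : ℝ} (hx : 0 ≤ x) (hxy : x ≤ y)
    (hy : y ≤ π - x) : sin x ≤ sin y := by
  rcases le_total y (π / 2) with h | h
  · exact sin_le_sin_of_le_of_le_pi_div_two (by linarith) h hxy
  · rw [← sin_pi_sub y]
    exact sin_le_sin_of_le_of_le_pi_div_two (by linarith) (by linarith) (by linarith)

theorem one_half_le_sin_pi_div {k : ℕ} (hk : 2 ≤ k) (hk' : k ≤ 6) :
    1 / 2 ≤ sin (π / k) := by
  have hk0 : (0 : ℝ) < k := by positivity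
  rw [← sin_pi_div_six]
  refine sin_le_sin_of_le_of_le_pi_div_two (by linarith [pi_pos]) ?_ ?_
  · rw [div_le_div_iff_of_pos_left pi_pos hk0 two_pos]; exact_mod_cast hk
  · rw [div_le_div_iff_of_pos_left pi_pos (by norm_num) hk0]; exact_mod_cast hk'

theorem tendsto_pi_mul_div_mul_add_one {k : ℕ} (hk : k ≠ 0) :
    Tendsto (fun M : ℕ => π * M / (k * M + 1)) atTop (𝓝 (π / k)) := by
  have hk0 : (k : ℝ) ≠ 0 := by exact_mod_cast hk
  have := (tendsto_natCast_div_add_atTop ((k : ℝ)⁻¹)).const_mul (π / k)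
  rw [mul_one] at this
  refine this.congr fun M => ?_
  field_simp

theorem Finset.exists_add_mem_of_card_lt {A : Finset ℕ} {M N : ℕ} (hA : ∀ a ∈ A, a < N)
    (hMN : 3 * M ≤ N) (hcard : M < A.card) :
    ∃ a ∈ A, ∃ d, a + d ∈ A ∧ M ≤ d ∧ d + M ≤ N := by
  by_contra! h
  have hgap : ∀ a ∈ A, ∀ c ∈ A, a ≤ c → c - a < M ∨ N < c - a + M := by
    intro a ha c hc hac
    have := h a ha (c - a) (by rwa [Nat.add_sub_cancel' hac])
    omega
  have hne : A.Nonempty := Finset.card_pos.mp (by omega)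
  obtain ⟨m, hmA, hm⟩ : ∃ m ∈ A, ∀ x ∈ A, m ≤ x :=
    ⟨A.min' hne, A.min'_mem hne, A.min'_le⟩
  -- Points of `A` at least `M` above `m` are more than `N - M` above it; shifting them down by
  -- `N - M` lands them, without collisions, in the window `[m, m + M)`.
  let fold : ℕ → ℕ := fun x => if x < m + M then x else x - (N - M)
  have hmaps : ∀ x ∈ A, fold x ∈ Finset.Ico m (m + M) := by
    intro x hx
    have := hm x hx
    have := hgap m hmA x hx (hm x hx)
    have := hA x hx
    simp only [fold, Finset.mem_Ico]
    split_ifs <;> omega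
  have hinj : Set.InjOn fold A := by
    intro x hx y hy hxy
    have := hgap m hmA x hx (hm x hx)
    have := hgap m hmA y hy (hm y hy)
    have := hA x hx
    have := hA y hy
    have := hgap x hx y hy
    have := hgap y hy x hx
    simp only [fold] at hxy
    split_ifs at hxy <;> omega
  have := Finset.card_le_card_of_injOn fold hmaps hinj
  rw [Nat.card_Ico] at this
  omega

noncomputable def unitRoot (n : ℕ) : ℂ := Complex.exp (2 * π * Complex.I / n)

theorem unitRoot_pow (N n : ℕ) :
    unitRoot N ^ n = Complex.exp (Complex.I * ↑(2 * π * n / N)) := by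
  rw [unitRoot, ← Complex.exp_nat_mul]
  push_cast
  ring_nf

theorem norm_unitRoot_pow (N n : ℕ) : ‖unitRoot N ^ n‖ = 1 := by
  rw [unitRoot_pow, Complex.norm_exp_I_mul_ofReal]

theorem norm_unitRoot (N : ℕ) : ‖unitRoot N‖ = 1 := by
  simpa using norm_unitRoot_pow N 1

theorem sum_unitRoot_pow {k : ℕ} (hk : 2 ≤ k) : ∑ i ∈ Finset.range k, unitRoot k ^ i = 0 :=
  (Complex.isPrimitiveRoot_exp k (by omega)).geom_sum_eq_zero (by omega)

theorem unitRoot_pow_mul_pow_sub {k i : ℕ} (hk : k ≠ 0) (hi : i ≤ k) :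
    unitRoot k ^ i * unitRoot k ^ (k - i) = 1 := by
  rw [← pow_add, Nat.add_sub_cancel' hi]
  exact (Complex.isPrimitiveRoot_exp k hk).pow_eq_one

theorem two_mul_sin_le_norm_unitRoot_pow_sub_pow {N M d : ℕ} (a : ℕ) (hM : M ≤ d)
    (hN : d + M ≤ N) : 2 * sin (π * M / N) ≤ ‖unitRoot N ^ (a + d) - unitRoot N ^ a‖ := by
  have hchord : ‖unitRoot N ^ (a + d) - unitRoot N ^ a‖ = ‖2 * sin (π * d / N)‖ := by
    rw [pow_add, ← mul_sub_one, norm_mul, norm_unitRoot_pow, one_mul, unitRoot_pow,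
      Complex.norm_exp_I_mul_ofReal_sub_one]
    ring_nf
  have hsin : sin (π * M / N) ≤ sin (π * d / N) := by
    refine sin_le_sin_of_le_of_le_pi_sub (by positivity) (by gcongr) ?_
    have : ((d + M : ℕ) : ℝ) / N ≤ 1 :=
      div_le_one_of_le₀ (by exact_mod_cast hN) (by positivity)
    push_cast at this
    nlinarith [pi_pos, show π * d / N + π * M / N = π * ((d + M) / N) by ring]
  rw [hchord, Real.norm_eq_abs]
  linarith [le_abs_self (2 * sin (π * d / N))]

theorem dist_add_unitRoot_pow_mul (N a b : ℕ) (p v : ℂ) :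
    dist (p + unitRoot N ^ a * v) (p + unitRoot N ^ b * v) =
      ‖unitRoot N ^ a - unitRoot N ^ b‖ * ‖v‖ := by
  rw [dist_add_left, dist_eq_norm, ← sub_mul, norm_mul]

theorem norm_le_dist_add_unitRoot_pow_mul {k a b : ℕ} (hk : 2 ≤ k) (hk' : k ≤ 6) (ha : a < k)
    (hb : b < k) (hab : a ≠ b) (p v : ℂ) :
    ‖v‖ ≤ dist (p + unitRoot k ^ a * v) (p + unitRoot k ^ b * v) := by
  wlog hba : b < a generalizing a b
  · rw [dist_comm]; exact this hb ha hab.symm (by omega)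
  obtain ⟨t, rfl⟩ := Nat.exists_eq_add_of_lt hba
  have hchord := two_mul_sin_le_norm_unitRoot_pow_sub_pow (N := k) (M := 1) (d := t + 1) b
    (by omega) (by omega)
  rw [Nat.cast_one, mul_one] at hchord
  rw [add_assoc, dist_add_unitRoot_pow_mul]
  nlinarith [one_half_le_sin_pi_div hk hk', norm_nonneg v]

namespace IsRotSymConvexBody

variable {k : ℕ} {p : ℂ} {C : Set ℂ}

theorem add_unitRoot_pow_mul_mem (hC : IsRotSymConvexBody k p C) {z : ℂ} (hz : z ∈ C)
    (n : ℕ) : p + unitRoot k ^ n * (z - p) ∈ C := by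
  induction n with
  | zero => simpa using hz
  | succ n ih =>
    rw [← hC.2.2.2]
    refine ⟨_, ih, ?_⟩
    simp only [planeRotation, unitRoot, pow_succ]
    ring

theorem closedBall_center_subset (hC : IsRotSymConvexBody k p C) (hk : 2 ≤ k) {c : ℂ} {s : ℝ}
    (hc : closedBall c s ⊆ C) : closedBall p s ⊆ C := by
  intro x hx
  -- `x` is the average of the points `x + ζ^i (c - p)`, the `i`-th rotations of points of
  -- `closedBall c s`.
  set y : ℕ → ℂ := fun i => x + unitRoot k ^ i * (c - p)
  have hy : ∀ i ∈ Finset.range k, y i ∈ C := by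
    intro i hi
    have hmem : c + unitRoot k ^ (k - i) * (x - p) ∈ closedBall c s := by
      rwa [mem_closedBall, dist_eq_norm, add_sub_cancel_left, norm_mul, norm_unitRoot_pow, one_mul,
        ← dist_eq_norm]
    convert hC.add_unitRoot_pow_mul_mem (hc hmem) i using 1
    linear_combination (p - x) * unitRoot_pow_mul_pow_sub (by omega) (Finset.mem_range.mp hi).le
  have hk0 : (k : ℂ) ≠ 0 := by exact_mod_cast (show k ≠ 0 by omega)
  have hsum : ∑ i ∈ Finset.range k, (k : ℝ)⁻¹ • y i = x := by
    simp only [y, Complex.real_smul, ← Finset.mul_sum, Finset.sum_add_distrib, ← Finset.sum_mul,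
      sum_unitRoot_pow hk, Finset.sum_const, Finset.card_range, nsmul_eq_mul]
    push_cast
    field_simp
    ring
  rw [← hsum]
  exact hC.2.1.sum_mem (fun _ _ => by positivity) (by simp [show k ≠ 0 by omega]) hy

theorem center_mem (hC : IsRotSymConvexBody k p C) (hk : 2 ≤ k) : p ∈ C := by
  obtain ⟨z, hz⟩ := hC.2.2.1
  exact hC.closedBall_center_subset hk (by simpa using interior_subset hz)
    (mem_closedBall_self le_rfl)

end IsRotSymConvexBody

theorem circumradius_le_of_subset_closedBall {C : Set ℂ} (hC : C.Nonempty) {c : ℂ} {R : ℝ}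
    (h : C ⊆ closedBall c R) : circumradius C ≤ R := by
  obtain ⟨z, hz⟩ := hC
  refine csInf_le ⟨0, ?_⟩ ⟨c, h⟩
  rintro R' ⟨c', hc'⟩
  exact dist_nonneg.trans (hc' hz)

theorem exists_closedBall_subset_of_lt_inradius {C : Set ℂ} {s : ℝ} (hs : s < inradius C) :
    ∃ c, closedBall c s ⊆ C := by
  obtain ⟨t, ⟨c, hc⟩, hst⟩ := exists_lt_of_lt_csSup (by exact ⟨-1, 0, by simp⟩) hs
  exact ⟨c, (closedBall_subset_closedBall hst.le).trans hc⟩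

theorem dist_le_iSup_diam {ι : Type*} [Finite ι] {S : ι → Set ℂ}
    (hS : ∀ i, IsBounded (S i)) {i : ι} {x y : ℂ} (hx : x ∈ S i) (hy : y ∈ S i) :
    dist x y ≤ ⨆ i, diam (S i) :=
  (dist_le_diam_of_mem (hS i) hx hy).trans
    (le_ciSup (f := fun i => diam (S i)) (Set.finite_range _).bddAbove i)

section Covering

variable {k : ℕ} {S : Fin k → Set ℂ}

theorem norm_le_iSup_diam_of_forall_mem_iUnion (hS : ∀ i, IsBounded (S i)) (hk : 2 ≤ k)
    (hk' : k ≤ 6) {p v : ℂ}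
    (hv : ∀ n : ℕ, p + unitRoot k ^ n * v ∈ ⋃ i, S i) (hp : p ∈ ⋃ i, S i) :
    ‖v‖ ≤ ⨆ i, diam (S i) := by
  let vertex : Option (Fin k) → ℂ := fun o => o.elim p fun j => p + unitRoot k ^ (j : ℕ) * v
  have hvertex : ∀ o, ∃ i, vertex o ∈ S i := by
    rintro (_ | j)
    · exact mem_iUnion.mp hp
    · exact mem_iUnion.mp (hv j)
  choose g hg using hvertex
  obtain ⟨o₁, o₂, hne, hg₁₂⟩ := Fintype.exists_ne_map_eq_of_card_lt g (by simp)
  have hsep : ‖v‖ ≤ dist (vertex o₁) (vertex o₂) := by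
    rcases o₁ with _ | a <;> rcases o₂ with _ | b
    · exact absurd rfl hne
    · simp [vertex, norm_unitRoot]
    · simp [vertex, norm_unitRoot]
    · exact norm_le_dist_add_unitRoot_pow_mul hk hk' a.2 b.2 (by simpa [Fin.val_inj] using hne) p v
  exact hsep.trans (dist_le_iSup_diam hS (hg o₁) (hg₁₂ ▸ hg o₂))

theorem two_mul_mul_sin_pi_mul_div_le_iSup_diam (hS : ∀ i, IsBounded (S i)) (hk : 3 ≤ k)
    {p : ℂ} {s : ℝ} (hs : 0 ≤ s)
    (hcover : sphere p s ⊆ ⋃ i, S i) (M : ℕ) :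
    2 * s * sin (π * M / (k * M + 1)) ≤ ⨆ i, diam (S i) := by
  set N := k * M + 1 with hN
  have hpoint : ∀ j : ℕ, ∃ i, p + unitRoot N ^ j * s ∈ S i := fun j =>
    mem_iUnion.mp (hcover (by simp [norm_unitRoot, abs_of_nonneg hs]))
  choose g hg using hpoint
  obtain ⟨i, -, hi⟩ := Finset.exists_lt_card_fiber_of_mul_lt_card_of_maps_to
    (s := Finset.range N) (t := Finset.univ) (f := g) (n := M) (fun _ _ => Finset.mem_univ _)
    (by simp [N])
  obtain ⟨a, ha, b, hab, hMb, hbN⟩ := Finset.exists_add_mem_of_card_lt (N := N)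
    (fun j hj => Finset.mem_range.mp (Finset.mem_filter.mp hj).1) (by nlinarith) hi
  rw [Finset.mem_filter] at ha hab
  calc 2 * s * sin (π * M / (k * M + 1))
      = 2 * sin (π * M / N) * ‖(s : ℂ)‖ := by simp [N, abs_of_nonneg hs]; ring
    _ ≤ ‖unitRoot N ^ (a + b) - unitRoot N ^ a‖ * ‖(s : ℂ)‖ := by
        gcongr; exact two_mul_sin_le_norm_unitRoot_pow_sub_pow a hMb hbN
    _ = dist (p + unitRoot N ^ (a + b) * s) (p + unitRoot N ^ a * s) :=
        (dist_add_unitRoot_pow_mul _ _ _ _ _).symm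
    _ ≤ ⨆ i, diam (S i) := dist_le_iSup_diam hS (hab.2 ▸ hg _) (ha.2 ▸ hg _)

theorem two_mul_mul_sin_pi_div_le_iSup_diam (hS : ∀ i, IsBounded (S i)) (hk : 3 ≤ k)
    {p : ℂ} {s : ℝ} (hs : 0 ≤ s)
    (hcover : sphere p s ⊆ ⋃ i, S i) : 2 * s * sin (π / k) ≤ ⨆ i, diam (S i) :=
  le_of_tendsto'
    (((continuous_sin.tendsto _).comp (tendsto_pi_mul_div_mul_add_one (by omega))).const_mul _)
    (two_mul_mul_sin_pi_mul_div_le_iSup_diam hS hk hs hcover)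

theorem IsRotSymConvexBody.circumradius_le_iSup_diam {p : ℂ} {C : Set ℂ}
    (hC : IsRotSymConvexBody k p C) (hk : 2 ≤ k) (hk' : k ≤ 6)
    (hS : ∀ i, IsBounded (S i)) (hcover : C ⊆ ⋃ i, S i) :
    circumradius C ≤ ⨆ i, diam (S i) := by
  have hp : p ∈ C := hC.center_mem hk
  obtain ⟨x, hxC, hx⟩ :=
    hC.1.exists_isMaxOn ⟨p, hp⟩ (continuous_id.dist continuous_const).continuousOn
  calc circumradius C ≤ dist x p :=
        circumradius_le_of_subset_closedBall ⟨p, hp⟩ fun y hy => hx hy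
    _ = ‖x - p‖ := dist_eq_norm x p
    _ ≤ ⨆ i, diam (S i) := norm_le_iSup_diam_of_forall_mem_iUnion hS hk hk'
        (fun n => hcover (hC.add_unitRoot_pow_mul_mem hxC n)) (hcover hp)

theorem IsRotSymConvexBody.two_mul_inradius_mul_sin_pi_div_le_iSup_diam {p : ℂ} {C : Set ℂ}
    (hC : IsRotSymConvexBody k p C) (hk : 3 ≤ k) (hS : ∀ i, IsBounded (S i))
    (hcover : C ⊆ ⋃ i, S i) : 2 * inradius C * sin (π / k) ≤ ⨆ i, diam (S i) := by
  have hball : ∀ s < inradius C, 2 * s * sin (π / k) ≤ ⨆ i, diam (S i) := by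
    intro s hs
    rcases lt_or_ge s 0 with hs0 | hs0
    · have : 0 ≤ sin (π / k) := sin_nonneg_of_nonneg_of_le_pi (by positivity)
        (div_le_self pi_pos.le (by exact_mod_cast (by omega : 1 ≤ k)))
      nlinarith [Real.iSup_nonneg fun i => (diam_nonneg : 0 ≤ diam (S i))]
    obtain ⟨c, hc⟩ := exists_closedBall_subset_of_lt_inradius hs
    exact two_mul_mul_sin_pi_div_le_iSup_diam hS hk hs0
      (sphere_subset_closedBall.trans ((hC.closedBall_center_subset (by omega) hc).trans hcover))
  have hcont : Continuous fun s : ℝ => 2 * s * sin (π / k) := by fun_prop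
  exact le_of_tendsto ((hcont.tendsto _).mono_left nhdsWithin_le_nhds)
    (eventually_nhdsWithin_of_forall (s := Iio (inradius C)) hball)

end Covering

/-- For `3 ≤ k ≤ 6` the standard `k`-partition is a minimizing `k`-subdivision for the
maximum relative diameter: every `k`-subdivision of a `k`-rotationally symmetric planar
convex body has maximum relative diameter at least `max {R, 2·r·sin(π/k)}`, which is the
maximum relative diameter of the standard `k`-partition. -/
theorem standardPartition_isMinimizing_subdivision
    (k : ℕ) (hk : 3 ≤ k) (hk' : k ≤ 6) (p : ℂ) (C : Set ℂ)
    (hC : IsRotSymConvexBody k p C)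
    (S : Fin k → Set ℂ) (hS : IsSubdivision C k S) :
    max (circumradius C) (2 * inradius C * Real.sin (Real.pi / k)) ≤
      ⨆ i, Metric.diam (S i) := by
  have hS_bdd : ∀ i, IsBounded (S i) := fun i => hC.1.isBounded.subset (hS.1 i)
  have hcover : C ⊆ ⋃ i, S i := hS.2.2.1.ge
  exact max_le (hC.circumradius_le_iSup_diam (by omega) hk' hS_bdd hcover)
    (hC.two_mul_inradius_mul_sin_pi_div_le_iSup_diam hk hS_bdd hcover)
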